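/- Let x = wε^μ ∈ W̃, v ∈ LP(x), and α a simple root. Then ℓ(x, vα) = 0 if and only if vs_α ∈ LP(x). -/
import Mathlib


open scoped BigOperators
open Classical

variable {V : Type*} [AddCommGroup V] [Module ℚ V]

/-- A (reduced, crystallographic) root system datum in a rational vector space `V`,
with positivity determined by a regular linear functional `f`. -/
structure RS (V : Type*) [AddCommGroup V] [Module ℚ V] : Type _ where
  Φ : Set V
  finite : Φ.Finite
  nonzero : ∀ α ∈ Φ, α ≠ 0
  f : Module.Dual ℚ V
  f_ne : ∀ α ∈ Φ, f α ≠ 0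
  neg_mem : ∀ α ∈ Φ, -α ∈ Φ
  coroot : V → Module.Dual ℚ V
  coroot_self : ∀ α ∈ Φ, coroot α α = 2
  reflect_mem : ∀ α ∈ Φ, ∀ β ∈ Φ, β - coroot α β • α ∈ Φ

namespace RS

variable (R : RS V)

/-- The set of positive roots. -/
def pos : Set V := {α ∈ R.Φ | 0 < R.f α}

/-- The set of negative roots. -/
def negs : Set V := {α ∈ R.Φ | R.f α < 0}

/-- The indicator function `Φ⁺` of the set of positive roots. -/
noncomputable def ind (α : V) : ℤ := if α ∈ R.pos then 1 else 0

/-- The positive roots as a finset. -/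
noncomputable def posFinset : Finset V := (Set.Finite.subset R.finite (show R.pos ⊆ R.Φ from fun α hα => hα.1)).toFinset

/-- `2ρ`, the sum of the positive roots. -/
noncomputable def twoRho : V := ∑ α ∈ R.posFinset, α

/-- The length functional `ℓ(x, α) = ⟨μ, α⟩ + Φ⁺(α) - Φ⁺(wα)` of `x = w ε^μ`. -/
noncomputable def lenF (e : V ≃ₗ[ℚ] V) (μ : Module.Dual ℚ V) (α : V) : ℚ :=
  μ α + (R.ind α : ℚ) - (R.ind (e α) : ℚ)

end RS

/-- Length of a Weyl group element: the number of positive roots sent to negative roots. -/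
noncomputable def wlen (R : RS V) {W : Type*} [Group W] (ρ : W →* (V ≃ₗ[ℚ] V)) (v : W) : ℕ :=
  {α | α ∈ R.pos ∧ ρ v α ∈ R.negs}.ncard

/-- The set of length positive elements for `x = w ε^μ`. -/
def LP (R : RS V) {W : Type*} [Group W] (ρ : W →* (V ≃ₗ[ℚ] V)) (w : W)
    (μ : Module.Dual ℚ V) : Set W :=
  {v | ∀ α ∈ R.pos, 0 ≤ R.lenF (ρ w) μ (ρ v α)}



lemma RS.ind_neg (R : RS V) {γ : V} (hγ : γ ∈ R.Φ) : R.ind (-γ) = 1 - R.ind γ := by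
  have hf := R.f_ne γ hγ
  rcases lt_or_gt_of_ne hf with h | h
  · have h1 : -γ ∈ R.pos := ⟨R.neg_mem γ hγ, by rw [map_neg]; linarith⟩
    have h2 : γ ∉ R.pos := fun hh => absurd hh.2 (not_lt.2 h.le)
    simp only [RS.ind, if_pos h1, if_neg h2]; ring
  · have h1 : -γ ∉ R.pos := fun hh => by
      have := hh.2; rw [map_neg] at this; linarith
    have h2 : γ ∈ R.pos := ⟨hγ, h⟩
    simp only [RS.ind, if_neg h1, if_pos h2]; ring

lemma RS.lenF_neg (R : RS V) (e : V ≃ₗ[ℚ] V) (he : ∀ γ ∈ R.Φ, e γ ∈ R.Φ)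
    (μ : Module.Dual ℚ V) {γ : V} (hγ : γ ∈ R.Φ) :
    R.lenF e μ (-γ) = - R.lenF e μ γ := by
  unfold RS.lenF
  rw [map_neg, map_neg, R.ind_neg hγ, R.ind_neg (he γ hγ)]
  push_cast
  ring

/-- for `x = w ε^μ`, `v ∈ LP(x)` and a simple root `α`,
`ℓ(x, vα) = 0 ↔ v s_α ∈ LP(x)`. -/
theorem statement12 (R : RS V) {W : Type*} [Group W] (ρ : W →* (V ≃ₗ[ℚ] V))
    (hρΦ : ∀ u : W, ∀ α ∈ R.Φ, ρ u α ∈ R.Φ)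
    (s : V → W) (hs : ∀ α ∈ R.Φ, ∀ β : V, ρ (s α) β = β - R.coroot α β • α)
    (Δ : Set V) (hΔpos : Δ ⊆ R.pos)
    (hperm : ∀ α ∈ Δ, ∀ β ∈ R.pos, β ≠ α → ρ (s α) β ∈ R.pos)
    (w v : W) (μ : Module.Dual ℚ V) (hv : v ∈ LP R ρ w μ)
    (α : V) (hα : α ∈ Δ) :
    R.lenF (ρ w) μ (ρ v α) = 0 ↔ v * s α ∈ LP R ρ w μ := by
  have hαΦ : α ∈ R.Φ := (hΔpos hα).1
  have hsα : ρ (s α) α = -α := by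
    rw [hs α hαΦ α, R.coroot_self α hαΦ]
    have : (2 : ℚ) • α = α + α := by
      rw [show (2:ℚ) = 1 + 1 by norm_num, add_smul, one_smul]
    rw [this]; abel
  have hmul : ∀ β : V, ρ (v * s α) β = ρ v (ρ (s α) β) := by
    intro β; rw [map_mul]; rfl
  have hvαΦ : ρ v α ∈ R.Φ := hρΦ v α hαΦ
  have hneg : R.lenF (ρ w) μ (ρ (v * s α) α) = - R.lenF (ρ w) μ (ρ v α) := by
    rw [hmul, hsα, map_neg]
    exact R.lenF_neg (ρ w) (hρΦ w) μ hvαΦ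
  constructor
  · intro h0 β hβ
    by_cases hβα : β = α
    · subst hβα; rw [hneg, h0]; norm_num
    · rw [hmul]
      exact hv _ (hperm α hα β hβ hβα)
  · intro hvs
    have h1 : 0 ≤ R.lenF (ρ w) μ (ρ v α) := hv α (hΔpos hα)
    have h2 : 0 ≤ R.lenF (ρ w) μ (ρ (v * s α) α) := hvs α (hΔpos hα)
    rw [hneg] at h2
    linarith
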